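/- arXiv:2505.21232 — 2 statements merged into one kernel-verified Lean document; each statement's English description precedes it below -/
import Mathlib

section
/- Let A ∈ ℝ^{m×n}, b ∈ ℝ^m, c ∈ ℝ^n and let H be the (2n+m)×(2n+m) block matrix H = [[ccᵀ + AᵀA, -cbᵀ, 0], [-bcᵀ, bbᵀ + AAᵀ, A], [0, Aᵀ, I]]. Then rank(H) ≤ m + n + 1. -/
/-!
With `R = (cᵀ, -bᵀ, 0)` and `B = (Aᵀ I)`, the matrix is `H = RᵀR + NᵀN` for the block-diagonal
`N = diag(A, B)` with `m + n` rows, so `H = MᵀM` where `M` stacks the single row `R` on top of `N`.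
Hence `rank H ≤ rank M ≤ m + n + 1`.
-/

open Matrix BigOperators

noncomputable def meritH {m n : ℕ} (A : Matrix (Fin m) (Fin n) ℝ)
    (b : Fin m → ℝ) (c : Fin n → ℝ) :
    Matrix (Fin n ⊕ (Fin m ⊕ Fin n)) (Fin n ⊕ (Fin m ⊕ Fin n)) ℝ :=
  Matrix.fromBlocks
    (vecMulVec c c + Aᵀ * A)
    (Matrix.fromCols (-(vecMulVec c b)) 0)
    (Matrix.fromRows (-(vecMulVec b c)) 0)
    (Matrix.fromBlocks (vecMulVec b b + A * Aᵀ) A Aᵀ 1)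

theorem Matrix.rank_vecMulVec_add_transpose_mul_self_le {ι κ R : Type*} [Fintype ι] [Fintype κ]
    [CommRing R] [StrongRankCondition R] (r : ι → R) (N : Matrix κ ι R) :
    (vecMulVec r r + Nᵀ * N).rank ≤ Fintype.card κ + 1 := by
  let M := fromRows (replicateRow (Fin 1) r) N
  have hM : vecMulVec r r + Nᵀ * N = Mᵀ * M := by
    rw [transpose_fromRows, fromCols_mul_fromRows, transpose_replicateRow, vecMulVec_eq (Fin 1)]
    rfl
  calc (vecMulVec r r + Nᵀ * N).rank = (Mᵀ * M).rank := by rw [hM]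
    _ ≤ Fintype.card (Fin 1 ⊕ κ) := (rank_mul_le_right _ _).trans (rank_le_card_height _)
    _ = Fintype.card κ + 1 := by simp [add_comm]

section

variable {m n : ℕ} (A : Matrix (Fin m) (Fin n) ℝ) (b : Fin m → ℝ) (c : Fin n → ℝ)

def meritR : Fin n ⊕ (Fin m ⊕ Fin n) → ℝ :=
  Sum.elim c (Sum.elim (-b) 0)

def meritB : Matrix (Fin n) (Fin m ⊕ Fin n) ℝ :=
  fromCols Aᵀ 1

theorem meritH_eq_vecMulVec_add :
    meritH A b c = vecMulVec (meritR b c) (meritR b c)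
      + (fromBlocks A 0 0 (meritB A))ᵀ * fromBlocks A 0 0 (meritB A) := by
  rw [fromBlocks_transpose, fromBlocks_multiply, meritB, transpose_fromCols, fromRows_mul_fromCols]
  simp only [meritH, transpose_transpose, transpose_one, Matrix.mul_one, Matrix.one_mul,
    Matrix.mul_zero, add_zero, zero_add]
  ext (i | i | i) (j | j | j) <;>
    simp [meritR, vecMulVec_apply, fromBlocks, fromRows_apply_inl, fromRows_apply_inr]

end

theorem meritH_rank_le {m n : ℕ} (A : Matrix (Fin m) (Fin n) ℝ)
    (b : Fin m → ℝ) (c : Fin n → ℝ) :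
    (meritH A b c).rank ≤ m + n + 1 := by
  rw [meritH_eq_vecMulVec_add]
  calc _ ≤ Fintype.card (Fin m ⊕ Fin n) + 1 := rank_vecMulVec_add_transpose_mul_self_le _ _
    _ = m + n + 1 := by simp
end

section
/- Let f₃(x,λ,s) = (1/2)(cᵀx - bᵀλ)² + (1/2)‖Ax - b‖² + (1/2)‖Aᵀλ + s - c‖² + (1/6)·Σ_j (max{-x_j,0}³ + max{-s_j,0}³). Its Hessian satisfies ‖∇²f₃(x,λ,s) - ∇²f₃(x',λ',s')‖₂ ≤ ‖(x,λ,s) - (x',λ',s')‖₂ for all points, i.e., the Hessian of f₃ is 1-Lipschitz in the spectral norm. -/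
open Matrix BigOperators

noncomputable def hessF3 {m n : ℕ} (A : Matrix (Fin m) (Fin n) ℝ)
    (b : Fin m → ℝ) (c : Fin n → ℝ) (x : Fin n → ℝ) (s : Fin n → ℝ) :
    Matrix (Fin n ⊕ (Fin m ⊕ Fin n)) (Fin n ⊕ (Fin m ⊕ Fin n)) ℝ :=
  meritH A b c +
    Matrix.diagonal
      (Sum.elim (fun j => max (-x j) 0)
        (Sum.elim (fun _ : Fin m => 0) (fun j => max (-s j) 0)))

/-! The quadratic part `meritH` cancels in the difference of two Hessians, which is therefore the
diagonal matrix of differences of negative parts. The spectral norm of a diagonal matrix is the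
largest absolute value of its entries, which is at most their Euclidean norm, and `t ↦ max (-t) 0`
is `1`-Lipschitz. -/

open scoped Matrix.Norms.L2Operator

lemma norm_le_sqrt_sum_sq {ι : Type*} [Fintype ι] (v : ι → ℝ) : ‖v‖ ≤ √(∑ i, v i ^ 2) :=
  (pi_norm_le_iff_of_nonneg (Real.sqrt_nonneg _)).2 fun i =>
    Real.abs_le_sqrt <| Finset.single_le_sum (f := fun i => v i ^ 2)
      (fun _ _ => sq_nonneg _) (Finset.mem_univ i)

lemma sq_max_neg_zero_sub_le (a b : ℝ) : (max (-a) 0 - max (-b) 0) ^ 2 ≤ (a - b) ^ 2 := by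
  refine sq_le_sq.2 ((abs_max_sub_max_le_abs (-a) (-b) 0).trans_eq ?_)
  rw [neg_sub_neg, abs_sub_comm]

lemma hessF3_sub_hessF3 {m n : ℕ} (A : Matrix (Fin m) (Fin n) ℝ) (b : Fin m → ℝ) (c : Fin n → ℝ)
    (x x' s s' : Fin n → ℝ) :
    hessF3 A b c x s - hessF3 A b c x' s' =
      diagonal (Sum.elim (fun j => max (-x j) 0 - max (-x' j) 0)
        (Sum.elim 0 (fun j => max (-s j) 0 - max (-s' j) 0))) := by
  rw [hessF3, hessF3, add_sub_add_left_eq_sub, diagonal_sub]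
  congr 1
  ext (j | i | j) <;> simp

theorem hessF3_lipschitz {m n : ℕ} (A : Matrix (Fin m) (Fin n) ℝ)
    (b : Fin m → ℝ) (c : Fin n → ℝ)
    (x x' : Fin n → ℝ) (lam lam' : Fin m → ℝ) (s s' : Fin n → ℝ) :
    ‖Matrix.toEuclideanCLM (𝕜 := ℝ) (hessF3 A b c x s) -
        Matrix.toEuclideanCLM (𝕜 := ℝ) (hessF3 A b c x' s')‖ ≤
      Real.sqrt (∑ j, (x j - x' j) ^ 2 + ∑ i, (lam i - lam' i) ^ 2 +
        ∑ j, (s j - s' j) ^ 2) := by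
  rw [← map_sub, ← cstar_norm_def, hessF3_sub_hessF3, l2_opNorm_diagonal]
  refine (norm_le_sqrt_sum_sq _).trans (Real.sqrt_le_sqrt ?_)
  simp only [Fintype.sum_sum_type, Sum.elim_inl, Sum.elim_inr, Pi.zero_apply, ne_eq,
    OfNat.ofNat_ne_zero, not_false_eq_true, zero_pow, Finset.sum_const_zero]
  have hx : ∑ j, (max (-x j) 0 - max (-x' j) 0) ^ 2 ≤ ∑ j, (x j - x' j) ^ 2 :=
    Finset.sum_le_sum fun j _ => sq_max_neg_zero_sub_le _ _
  have hs : ∑ j, (max (-s j) 0 - max (-s' j) 0) ^ 2 ≤ ∑ j, (s j - s' j) ^ 2 :=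
    Finset.sum_le_sum fun j _ => sq_max_neg_zero_sub_le _ _
  have hlam : 0 ≤ ∑ i, (lam i - lam' i) ^ 2 := by positivity
  linarith
end
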